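/- arXiv:2203.03323 — 11 statements merged into one kernel-verified Lean document; each statement's English description precedes it below -/
import Mathlib

section
/- Let V be an n-dimensional vector space over a field F with n ≥ 2. Let r_1,…,r_k be transvections, r_i = 1 + u_i ⊗ φ_i, forming a path in which φ_{i+1}(u_i) ≠ 0 for all 1 ≤ i ≤ k−1 and φ_{i+1}(u_j) = 0 whenever j < i. Then the vectors u_1,…,u_{k−1} are linearly independent; in particular k ≤ n + 1. -/
/-- If transvections `r_0, …, r_{k-1}`, `r_i = 1 + u_i ⊗ φ_i`, form a path without shortcuts
(`φ_{i+1}(u_i) ≠ 0` and `φ_{i+1}(u_j) = 0` for `j < i`), then `u_0, …, u_{k-2}` are linearly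
independent; in particular `k ≤ n + 1` where `n = dim V`. -/
theorem path_no_shortcut_linearIndependent {F V : Type*} [Field F] [AddCommGroup V] [Module F V]
    [FiniteDimensional F V]
    (n : ℕ) (hn : Module.finrank F V = n) (hn2 : 2 ≤ n)
    (k : ℕ) (u : ℕ → V) (φ : ℕ → (V →ₗ[F] F))
    (htr : ∀ i, φ i (u i) = 0)
    (hpath : ∀ i, i + 1 ≤ k - 1 → φ (i + 1) (u i) ≠ 0)
    (hnoshort : ∀ i j, j < i → i + 1 ≤ k - 1 → φ (i + 1) (u j) = 0) :
    LinearIndependent F (fun i : Fin (k - 1) => u i) ∧ k ≤ n + 1 := by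
  set m := k - 1 with hm
  have hli : LinearIndependent F (fun i : Fin m => u i) := by
    rw [Fintype.linearIndependent_iff]
    intro g hg
    have H : ∀ t, ∀ i : Fin m, m - i.val ≤ t → g i = 0 := by
      intro t
      induction t with
      | zero => intro i h; exact absurd h (by omega)
      | succ t ih =>
        intro i _
        have hz : ∀ j : Fin m, i < j → g j = 0 := fun j hij => ih j (by
          have h1 : (i:ℕ) < (j:ℕ) := hij
          have h2 : m - (i:ℕ) ≤ t + 1 := ‹_›
          omega)
        have h1 : (i : ℕ) + 1 ≤ k - 1 := by have := i.isLt; omega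
        have happ := congrArg (φ ((i : ℕ) + 1)) hg
        rw [map_sum, map_zero] at happ
        have hsum : ∑ j : Fin m, g j • (φ ((i : ℕ) + 1)) (u j) = 0 := by
          simpa [map_smul] using happ
        rw [Finset.sum_eq_single i] at hsum
        · have := hpath i h1
          rcases smul_eq_zero.mp hsum with h | h
          · exact h
          · exact absurd h this
        · intro j _ hji
          rcases lt_or_gt_of_ne (fun h => hji (Fin.ext h) : (j : ℕ) ≠ (i : ℕ)) with h | h
          · rw [hnoshort i j h h1, smul_zero]
          · rw [hz j h, zero_smul]
        · intro h; exact absurd (Finset.mem_univ i) h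
    intro i
    exact H m i (by have := i.isLt; omega)
  refine ⟨hli, ?_⟩
  have := hli.fintype_card_le_finrank
  rw [Fintype.card_fin, hn] at this
  omega
end

section
/- Let V be a finite-dimensional vector space over a field F and let s_1, s_2, s_3 be transvections s_i = 1 + u_i ⊗ φ_i. Define the weight w(s_i, s_j, s_k) := φ_j(u_i)·φ_k(u_j)·φ_i(u_k) and w(s_i, s_j) := φ_j(u_i)·φ_i(u_j). Then, with s_1^{s_2} := s_2^{-1} s_1 s_2, we have w(s_1,s_2,s_3) − w(s_1,s_3,s_2) = w(s_1,s_3) − w(s_1,s_2)·w(s_2,s_3) − w(s_1^{s_2}, s_3). -/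
/-- Weight identity: `w(s₁,s₂,s₃) − w(s₁,s₃,s₂) = w(s₁,s₃) − w(s₁,s₂)w(s₂,s₃) − w(s₁^{s₂},s₃)`,
where `s_i = 1 + u_i ⊗ φ_i` are transvections,
`s₁^{s₂} = 1 + (u₁ − φ₂(u₁)u₂) ⊗ (φ₁ + φ₁(u₂)φ₂)`,
`w(s,t) = φ_t(u_s)·φ_s(u_t)` and `w(s,t,r) = φ_t(u_s)·φ_r(u_t)·φ_s(u_r)`. -/
theorem weight_abc_acb {F V : Type*} [Field F] [AddCommGroup V] [Module F V]
    [FiniteDimensional F V]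
    (u₁ u₂ u₃ : V) (φ₁ φ₂ φ₃ : V →ₗ[F] F)
    (h₁ : φ₁ u₁ = 0) (h₂ : φ₂ u₂ = 0) (h₃ : φ₃ u₃ = 0) :
    φ₂ u₁ * φ₃ u₂ * φ₁ u₃ - φ₃ u₁ * φ₂ u₃ * φ₁ u₂
      = φ₃ u₁ * φ₁ u₃ - (φ₂ u₁ * φ₁ u₂) * (φ₃ u₂ * φ₂ u₃)
        - φ₃ (u₁ - φ₂ u₁ • u₂) * (φ₁ + φ₁ u₂ • φ₂) u₃ := by
  simp [map_sub, map_smul, h₁, h₂, h₃, smul_eq_mul]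
  ring
end

section
/- Let V be a finite-dimensional vector space over a field F, and let s_1, s_2, s_3, s_4 be transvections s_i = 1 + u_i ⊗ φ_i. For λ ∈ F define s_3^{s_4^λ} := (1 + λ u_4 ⊗ φ_4)^{-1} s_3 (1 + λ u_4 ⊗ φ_4) = 1 + (u_3 − λφ_4(u_3)u_4) ⊗ (φ_3 + λφ_3(u_4)φ_4). Then w(s_1, s_2, s_3^{s_4^λ}) = A + λB + λ²C, where A = w(s_1,s_2,s_3), B = w(s_1,s_2,s_4,s_3) − w(s_1,s_2,s_3,s_4), and C = −w(s_3,s_4)·w(s_1,s_2,s_4). -/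
/-- For transvections `s_i = 1 + u_i ⊗ φ_i` and
`s₃^{s₄^λ} = 1 + (u₃ − λφ₄(u₃)u₄) ⊗ (φ₃ + λφ₃(u₄)φ₄)`, the weight of the triple
`(s₁, s₂, s₃^{s₄^λ})` is a quadratic polynomial `A + λB + λ²C` in `λ`, where
`A = w(s₁,s₂,s₃)`, `B = w(s₁,s₂,s₄,s₃) − w(s₁,s₂,s₃,s₄)`, `C = −w(s₃,s₄)·w(s₁,s₂,s₄)`. -/
theorem weight_conj_quadratic {F V : Type*} [Field F] [AddCommGroup V] [Module F V]
    [FiniteDimensional F V]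
    (u₁ u₂ u₃ u₄ : V) (φ₁ φ₂ φ₃ φ₄ : V →ₗ[F] F)
    (h₁ : φ₁ u₁ = 0) (h₂ : φ₂ u₂ = 0) (h₃ : φ₃ u₃ = 0) (h₄ : φ₄ u₄ = 0)
    (lam : F) :
    φ₂ u₁ * ((φ₃ + (lam * φ₃ u₄) • φ₄) u₂) * (φ₁ (u₃ - (lam * φ₄ u₃) • u₄))
      = (φ₂ u₁ * φ₃ u₂ * φ₁ u₃)
        + lam * (φ₂ u₁ * φ₄ u₂ * φ₃ u₄ * φ₁ u₃ - φ₂ u₁ * φ₃ u₂ * φ₄ u₃ * φ₁ u₄)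
        + lam ^ 2 * (-(φ₄ u₃ * φ₃ u₄) * (φ₂ u₁ * φ₄ u₂ * φ₁ u₄)) := by
  simp only [LinearMap.add_apply, LinearMap.smul_apply, map_sub, map_smul, smul_eq_mul]
  ring
end

section
/- Let H ≤ SL(V) be generated by a set Y of transvections in a finite-dimensional vector space V over a field F. If H acts irreducibly on V, then the set of direction vectors {v : ∃φ, 1 + v ⊗ φ ∈ Y} spans V, and the set of functionals {φ : ∃v, 1 + v ⊗ φ ∈ Y} spans V*. -/
/-- If the group generated by a family of transvections `1 + a_i ⊗ φ_i` acts irreducibly on `V`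
(`dim V ≥ 2`), then the direction vectors `a_i` span `V` and the functionals `φ_i` span `V*`. -/
theorem irreducible_transvection_group_spans {F V : Type*} [Field F] [AddCommGroup V] [Module F V]
    [FiniteDimensional F V]
    (hdim : 2 ≤ Module.finrank F V)
    {ι : Type*} (a : ι → V) (φ : ι → (V →ₗ[F] F))
    (ha : ∀ i, a i ≠ 0) (hφ : ∀ i, φ i ≠ 0) (htr : ∀ i, φ i (a i) = 0)
    (hirr : ∀ W : Submodule F V, (∀ i, ∀ x ∈ W, x + φ i x • a i ∈ W) → W = ⊥ ∨ W = ⊤) :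
    Submodule.span F (Set.range a) = ⊤ ∧ Submodule.span F (Set.range φ) = ⊤ := by
  -- first, ι is nonempty
  haveI : Nontrivial V := Module.nontrivial_of_finrank_pos (R := F) (by omega)
  have hne : Nonempty ι := by
    by_contra h
    rw [not_nonempty_iff] at h
    obtain ⟨v, hv⟩ := exists_ne (0 : V)
    rcases hirr (Submodule.span F {v}) (fun i => (h.elim i)) with h1 | h1
    · exact hv (by simpa [h1] using Submodule.mem_span_singleton_self (R := F) v)
    · have := finrank_span_singleton (K := F) hv
      rw [h1, finrank_top] at this
      omega
  obtain ⟨i0⟩ := hne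
  constructor
  · rcases hirr (Submodule.span F (Set.range a)) (fun i x hx => by
      exact Submodule.add_mem _ hx (Submodule.smul_mem _ _
        (Submodule.subset_span ⟨i, rfl⟩))) with h1 | h1
    · exfalso
      apply ha i0
      have := Submodule.subset_span (R := F) (s := Set.range a) ⟨i0, rfl⟩
      rw [h1] at this
      simpa using this
    · exact h1
  · set Φ := Submodule.span F (Set.range φ) with hΦ
    have hcoann : Φ.dualCoannihilator = ⊥ := by
      rcases hirr Φ.dualCoannihilator (fun i x hx => by
        have hx' : ∀ f ∈ Set.range φ, f x = 0 := by
          have := Submodule.coe_dualCoannihilator_span (R := F) (Set.range φ)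
          rw [← hΦ] at this
          have hxx : x ∈ (Φ.dualCoannihilator : Set V) := hx
          rw [this] at hxx
          exact hxx
        have : φ i x = 0 := hx' _ ⟨i, rfl⟩
        simpa [this] using hx) with h1 | h1
      · exact h1
      · exfalso
        apply hφ i0
        ext x
        have hx : x ∈ Φ.dualCoannihilator := h1 ▸ Submodule.mem_top
        rw [Submodule.mem_dualCoannihilator] at hx
        exact hx _ (Submodule.subset_span ⟨i0, rfl⟩)
    have hrank : Module.finrank F Φ = Module.finrank F (Module.Dual F V) := by
      have h2 := Subspace.finrank_add_finrank_dualCoannihilator_eq Φ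
      rw [hcoann, finrank_bot, add_zero] at h2
      rw [Subspace.dual_finrank_eq, ← h2]
    exact Submodule.eq_top_of_finrank_eq hrank
end

section
/- Let V be a finite-dimensional vector space over a field F with dim V ≥ 2, and let Y be a set of transvections whose direction vectors span V, whose functionals span V*, and whose transvection graph is strongly connected (the directed graph on Y with an edge from 1+u⊗φ to 1+v⊗ψ iff ψ(u) ≠ 0). Then ⟨Y⟩ acts irreducibly on V. -/
/-- If the direction vectors of a family of transvections span `V`, the functionals span `V*`,
and the transvection graph (edge from `i` to `j` iff `φ_j (a_i) ≠ 0`) is strongly connected,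
then the generated group acts irreducibly on `V` (`dim V ≥ 2`). -/
theorem spans_strongly_connected_irreducible {F V : Type*} [Field F] [AddCommGroup V] [Module F V]
    [FiniteDimensional F V]
    (hdim : 2 ≤ Module.finrank F V)
    {ι : Type*} (a : ι → V) (φ : ι → (V →ₗ[F] F))
    (ha : ∀ i, a i ≠ 0) (hφ : ∀ i, φ i ≠ 0) (htr : ∀ i, φ i (a i) = 0)
    (hspan_a : Submodule.span F (Set.range a) = ⊤)
    (hspan_φ : Submodule.span F (Set.range φ) = ⊤)
    (hconn : ∀ i j : ι, Relation.ReflTransGen (fun i j => φ j (a i) ≠ 0) i j) :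
    ∀ W : Submodule F V, (∀ i, ∀ x ∈ W, x + φ i x • a i ∈ W) → W = ⊥ ∨ W = ⊤ := by
  intro W hW
  -- key: if x ∈ W and φ i x ≠ 0 then a i ∈ W
  have key : ∀ i, ∀ x ∈ W, φ i x ≠ 0 → a i ∈ W := by
    intro i x hx hne
    have h1 : φ i x • a i ∈ W := by
      have := W.sub_mem (hW i x hx) hx
      simpa using this
    have : (φ i x)⁻¹ • (φ i x • a i) ∈ W := W.smul_mem _ h1
    rwa [smul_smul, inv_mul_cancel₀ hne, one_smul] at this
  by_cases hbot : W = ⊥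
  · exact Or.inl hbot
  · right
    obtain ⟨x, hxW, hx0⟩ := Submodule.exists_mem_ne_zero_of_ne_bot hbot
    -- some φ i doesn't vanish at x
    have hex : ∃ i, φ i x ≠ 0 := by
      by_contra h
      push_neg at h
      apply hx0
      rw [← Module.forall_dual_apply_eq_zero_iff F x]
      intro f
      have hf : f ∈ Submodule.span F (Set.range φ) := hspan_φ ▸ Submodule.mem_top
      induction hf using Submodule.span_induction with
      | mem g hg => obtain ⟨i, rfl⟩ := hg; exact h i
      | zero => simp
      | add g h' _ _ hg hh => simp [hg, hh]
      | smul c g _ hg => simp [hg]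
    obtain ⟨i0, hi0⟩ := hex
    have hai0 : a i0 ∈ W := key i0 x hxW hi0
    -- propagate along the graph
    have hall : ∀ j, a j ∈ W := by
      intro j
      have := hconn i0 j
      induction this with
      | refl => exact hai0
      | tail hp he ih => exact key _ _ ih he
    rw [eq_top_iff, ← hspan_a]
    exact Submodule.span_le.mpr (Set.range_subset_iff.mpr hall)
end

section
/- Let n ≥ 2 and q be a prime power. For every λ ∈ F_q there exists g ∈ Sp(n, q) (the isometry group of a non-degenerate alternating form on F_q^n, n even) with trace(g) = λ. Consequently the traces of elements of Sp(n,q) generate the field F_q. -/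
open LinearMap

lemma my_trace_smulRight {R M : Type*} [CommRing R] [AddCommGroup M] [Module R M]
    [Module.Free R M] [Module.Finite R M] (l : M →ₗ[R] R) (m : M) :
    LinearMap.trace R M (l.smulRight m) = l m := by
  have h : l.smulRight m = dualTensorHom R M M (l ⊗ₜ[R] m) := by
    ext x; simp [dualTensorHom_apply]
  rw [h, trace_eq_contract_apply, contractLeft_apply]

/-- For `n ≥ 2` even, every element of `F_q` is the trace of an element of `Sp(n,q)` (the
isometry group of a non-degenerate alternating bilinear form on `F_q^n`); consequently the
traces of elements of `Sp(n,q)` generate the field `F_q`. -/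
theorem symplectic_traces_generate {F : Type*} [Field F] [Fintype F]
    (n : ℕ) (hn : 2 ≤ n) (heven : Even n)
    (f : (Fin n → F) →ₗ[F] (Fin n → F) →ₗ[F] F)
    (halt : ∀ v, f v v = 0)
    (hnd : ∀ v, (∀ w, f v w = 0) → v = 0) :
    (∀ lam : F, ∃ g : (Fin n → F) →ₗ[F] (Fin n → F),
        (∀ x y, f (g x) (g y) = f x y) ∧ LinearMap.trace F (Fin n → F) g = lam) ∧
      Subfield.closure {x : F | ∃ g : (Fin n → F) →ₗ[F] (Fin n → F),
        (∀ v w, f (g v) (g w) = f v w) ∧ LinearMap.trace F (Fin n → F) g = x} = ⊤ := by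
  have skew : ∀ v w, f w v = - f v w := by
    intro v w
    have h := halt (v + w)
    simp [map_add, halt] at h
    exact eq_neg_of_add_eq_zero_left h
  -- a hyperbolic pair
  have npos : 0 < n := by omega
  haveI : NeZero n := ⟨by omega⟩
  set e : Fin n → F := Pi.single (0 : Fin n) 1 with he
  have hene : e ≠ 0 := by
    intro h
    have := congrFun h (0 : Fin n)
    simp [he] at this
  obtain ⟨w, hw⟩ : ∃ w, f e w ≠ 0 := by
    by_contra h
    push_neg at h
    exact hene (hnd e h)
  set e' : Fin n → F := (f e w)⁻¹ • w with he'
  have h1 : f e e' = 1 := by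
    simp [he', map_smul, smul_eq_mul]
    field_simp
  have h2 : f e' e = -1 := by rw [skew e e', h1]
  have hee : f e e = 0 := halt e
  have he'e' : f e' e' = 0 := halt e'
  have main : ∀ lam : F, ∃ g : (Fin n → F) →ₗ[F] (Fin n → F),
      (∀ x y, f (g x) (g y) = f x y) ∧ LinearMap.trace F (Fin n → F) g = lam := by
    intro lam
    set t : F := lam - (n : F) + 2 with ht
    set A : (Fin n → F) →ₗ[F] F := f.flip e - f.flip e' with hA
    set B : (Fin n → F) →ₗ[F] F := f.flip e' + (1 - t) • f.flip e with hB
    refine ⟨LinearMap.id + A.smulRight e + B.smulRight e', ?_, ?_⟩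
    · intro x y
      have hxe : f e x = - f x e := skew x e
      have hxe' : f e' x = - f x e' := skew x e'
      have hye : f e y = - f y e := skew y e
      have hye' : f e' y = - f y e' := skew y e'
      simp only [LinearMap.add_apply, LinearMap.id_apply, LinearMap.smulRight_apply,
        map_add, map_smul, LinearMap.add_apply, LinearMap.smul_apply, smul_eq_mul,
        hA, hB, LinearMap.sub_apply, LinearMap.flip_apply]
      rw [hye, hye', hee, he'e', h1, h2]
      ring
    · rw [map_add, map_add, LinearMap.trace_id, my_trace_smulRight, my_trace_smulRight]
      simp only [hA, hB, LinearMap.sub_apply, LinearMap.add_apply, LinearMap.smul_apply,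
        LinearMap.flip_apply, smul_eq_mul]
      rw [hee, he'e', h1, h2]
      rw [Module.finrank_fin_fun]
      ring
  refine ⟨main, ?_⟩
  rw [eq_top_iff]
  rintro x -
  exact Subfield.subset_closure (main x)
end

section
/- Let n ≥ 3 and q = q_0² a square prime power. The subfield of F_q generated by the traces of all elements of SU(n, q_0) (determinant-one isometries of a non-degenerate hermitian form on F_q^n) is all of F_q. In particular, for b a generator of F_q^×, there is an element of SU(n,q_0) with trace −b^{q_0−1} + (n−3), and since b^{q_0−1} has multiplicative order q_0+1, any subfield F_{p^r} containing all traces satisfies (q_0+1) ∣ (p^r − 1), forcing p^r = q. -/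
/-!
Take an orthonormal basis `e₀, e₁, e₂, …` of the hermitian form; it exists because the trace
`z ↦ z + z ^ q₀` is not identically zero (so some vector is anisotropic) and every nonzero element
of the fixed field `F_{q₀}` is a norm `u ^ (q₀ + 1)` (so it can be normalised). For `α` of
multiplicative order `q₀ + 1` we have `σ α * α = 1`, and the monomial map `e₀ ↦ -α e₀`,
`e₁ ↦ α⁻¹ e₂`, `e₂ ↦ e₁`, fixing the other basis vectors, is an isometry of determinant
`(-1) * (-α) * α⁻¹ = 1` and trace `(n - 3) - α`. So `α` lies in the subfield generated by the
traces. That subfield `K` then has `q₀ + 1 ∣ |K| - 1`, so `|K| > q₀`, and as `q₀ ^ 2` is a power of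
`|K|` it must be `K = F`.
-/

namespace FiniteField

variable {F : Type*} [Field F] [Fintype F] {q₀ : ℕ}

theorem two_le_of_card_eq_sq (hq : Fintype.card F = q₀ ^ 2) : 2 ≤ q₀ := by
  have := Fintype.one_lt_card (α := F)
  by_contra! h
  interval_cases q₀ <;> simp_all

theorem card_units_eq_of_card_eq_sq (hq : Fintype.card F = q₀ ^ 2) :
    Nat.card Fˣ = (q₀ + 1) * (q₀ - 1) := by
  obtain ⟨m, rfl⟩ : ∃ m, q₀ = m + 1 := ⟨q₀ - 1, by have := two_le_of_card_eq_sq hq; omega⟩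
  rw [Nat.card_units, Nat.card_eq_fintype_card, hq, Nat.add_sub_cancel]
  ring_nf
  omega

theorem exists_orderOf_eq_add_one (hq : Fintype.card F = q₀ ^ 2) :
    ∃ α : F, orderOf α = q₀ + 1 := by
  classical
  have hdvd : q₀ + 1 ∣ Fintype.card Fˣ := by
    rw [Fintype.card_eq_nat_card, card_units_eq_of_card_eq_sq hq]
    exact dvd_mul_right _ _
  obtain ⟨ζ, hζ⟩ : ∃ ζ : Fˣ, orderOf ζ = q₀ + 1 := by
    have := (IsCyclic.card_orderOf_eq_totient hdvd).trans_ne (Nat.totient_pos.2 q₀.succ_pos).ne'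
    simpa [Finset.card_eq_zero, Finset.eq_empty_iff_forall_notMem] using this
  exact ⟨ζ, orderOf_units.trans hζ⟩

theorem exists_pow_add_one_eq (hq : Fintype.card F = q₀ ^ 2) {d : F} (hd0 : d ≠ 0)
    (hd : d ^ q₀ = d) : ∃ u : F, u ^ (q₀ + 1) = d := by
  have h2 := two_le_of_card_eq_sq hq
  have hN := card_units_eq_of_card_eq_sq hq
  -- both subgroups of the cyclic group `Fˣ` have order `q₀ - 1`
  have hrange : (powMonoidHom (q₀ + 1) : Fˣ →* Fˣ).range = (powMonoidHom (q₀ - 1)).ker := by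
    refine Subgroup.eq_of_le_of_card_ge ?_ ?_
    · rintro _ ⟨u, rfl⟩
      simp only [MonoidHom.mem_ker, powMonoidHom_apply, ← pow_mul, ← hN, pow_card_eq_one']
    · rw [IsCyclic.card_powMonoidHom_range, IsCyclic.card_powMonoidHom_ker, hN,
        Nat.gcd_mul_right_left, Nat.gcd_mul_left_left, Nat.mul_div_cancel_left _ q₀.succ_pos]
  have hker : Units.mk0 d hd0 ∈ (powMonoidHom (q₀ - 1) : Fˣ →* Fˣ).ker := by
    rw [MonoidHom.mem_ker, powMonoidHom_apply, Units.ext_iff, Units.val_pow_eq_pow_val,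
      Units.val_mk0, Units.val_one]
    refine mul_right_cancel₀ hd0 ?_
    rw [pow_sub_one_mul (by omega), hd, one_mul]
  obtain ⟨u, hu⟩ := hrange ▸ hker
  exact ⟨u, by simpa using congrArg Units.val hu⟩

open Polynomial in
theorem exists_add_pow_ne_zero (hq : Fintype.card F = q₀ ^ 2) : ∃ z : F, z + z ^ q₀ ≠ 0 := by
  by_contra! h
  have h2 := two_le_of_card_eq_sq hq
  have hdeg : (X ^ q₀ + X : F[X]).natDegree < Fintype.card F := by
    rw [natDegree_add_eq_left_of_natDegree_lt (by simp; omega), natDegree_X_pow, hq]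
    nlinarith
  have hzero := eq_zero_of_natDegree_lt_card_of_eval_eq_zero _ Function.injective_id
    (fun z => by simpa [add_comm] using h z) hdeg
  simpa [coeff_X, show 1 ≠ q₀ by omega] using congrArg (coeff · q₀) hzero

theorem _root_.Subfield.eq_top_of_orderOf_eq_add_one (hq : Fintype.card F = q₀ ^ 2)
    {K : Subfield F} {α : F} (hαK : α ∈ K) (hα : orderOf α = q₀ + 1) : K = ⊤ := by
  have : Fintype K := Fintype.ofFinite K
  have hα0 : (⟨α, hαK⟩ : K) ≠ 0 := by
    rintro ⟨⟩
    simp [orderOf_zero] at hα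
  have hdvd : q₀ + 1 ∣ Fintype.card K - 1 := hα ▸ orderOf_dvd_of_pow_eq_one
    (by simpa using congrArg Subtype.val (FiniteField.pow_card_sub_one_eq_one _ hα0))
  have hcard : q₀ ^ 2 = Fintype.card K ^ Module.finrank K F := hq ▸ Module.card_eq_pow_finrank
  have hK : q₀ + 2 ≤ Fintype.card K := by
    have := Nat.le_of_dvd (Nat.sub_pos_of_lt Fintype.one_lt_card) hdvd
    omega
  have hfinrank : Module.finrank K F = 1 := by
    have hpos : 0 < Module.finrank K F := Module.finrank_pos
    by_contra hne
    have : Fintype.card K ^ 2 ≤ q₀ ^ 2 := hcard ▸ Nat.pow_le_pow_right (by omega) (by omega)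
    have := (Nat.pow_le_pow_iff_left two_ne_zero).mp this
    omega
  refine SetLike.coe_injective (Set.eq_top_of_card_le_of_finite ?_)
  rw [hfinrank, pow_one] at hcard
  simp [Nat.card_eq_fintype_card, hq, hcard]

end FiniteField

section HermitianForm

variable {F V : Type*} [Field F] [AddCommGroup V] [Module F V] {σ : F →+* F}
  {f : V →ₛₗ[σ] V →ₗ[F] F} {ι : Type*}

def IsOrthonormal (f : V →ₛₗ[σ] V →ₗ[F] F) (v : ι → V) : Prop :=
  f.IsOrthoᵢ v ∧ ∀ i, f (v i) (v i) = 1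

def orthogonalSubmodule (f : V →ₛₗ[σ] V →ₗ[F] F) (v : ι → V) : Submodule F V :=
  LinearMap.ker (LinearMap.pi fun i => f (v i))

theorem mem_orthogonalSubmodule {v : ι → V} {x : V} :
    x ∈ orthogonalSubmodule f v ↔ ∀ i, f (v i) x = 0 := by
  simp [orthogonalSubmodule, funext_iff]

theorem orthogonalSubmodule_ne_bot [Fintype ι] [FiniteDimensional F V] (v : ι → V)
    (hcard : Fintype.card ι < Module.finrank F V) : orthogonalSubmodule f v ≠ ⊥ :=
  LinearMap.ker_ne_bot_of_finrank_lt (by simpa using hcard)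

namespace IsOrthonormal

variable {v : ι → V}

theorem apply_eq [DecidableEq ι] (hv : IsOrthonormal f v) (i j : ι) :
    f (v i) (v j) = if i = j then 1 else 0 := by
  split_ifs with h
  · exact h ▸ hv.2 i
  · exact hv.1 h

theorem linearIndependent (hv : IsOrthonormal f v) : LinearIndependent F v :=
  LinearMap.linearIndependent_of_isOrthoᵢ hv.1 fun i => by simp [hv.2 i]

theorem comp (hv : IsOrthonormal f v) {κ : Type*} {e : κ → ι} (he : Function.Injective e) :
    IsOrthonormal f (v ∘ e) :=
  ⟨hv.1.comp_of_injective he, fun i => hv.2 (e i)⟩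

theorem cons (hherm : ∀ x y, f y x = σ (f x y)) {k : ℕ} {v : Fin k → V}
    (hv : IsOrthonormal f v) {e : V} (he : f e e = 1) (horth : ∀ i, f (v i) e = 0) :
    IsOrthonormal f (Fin.cons e v : Fin (k + 1) → V) := by
  refine ⟨fun i j hij => ?_, fun i => Fin.cases he hv.2 i⟩
  dsimp only [Function.onFun]
  induction i using Fin.cases <;> induction j using Fin.cases
  · exact absurd rfl hij
  · rw [Fin.cons_zero, Fin.cons_succ, hherm, horth, map_zero]
  · rw [Fin.cons_zero, Fin.cons_succ, horth]
  · exact hv.1 (fun h => hij (congrArg Fin.succ h))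

theorem sub_sum_mem_orthogonalSubmodule [Fintype ι] (hv : IsOrthonormal f v) (x : V) :
    x - ∑ i, f (v i) x • v i ∈ orthogonalSubmodule f v := by
  classical
  simp [mem_orthogonalSubmodule, hv.apply_eq]

theorem exists_mem_orthogonalSubmodule_apply_ne_zero [Fintype ι]
    (hherm : ∀ x y, f y x = σ (f x y)) (hnd : ∀ v, (∀ w, f v w = 0) → v = 0)
    (hv : IsOrthonormal f v) {w : V} (hw : w ∈ orthogonalSubmodule f v) (hw0 : w ≠ 0) :
    ∃ y ∈ orthogonalSubmodule f v, f w y ≠ 0 := by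
  obtain ⟨y, hy⟩ : ∃ y, f w y ≠ 0 := by
    by_contra! h
    exact hw0 (hnd w h)
  refine ⟨_, hv.sub_sum_mem_orthogonalSubmodule y, ?_⟩
  have hwv : ∀ i, f w (v i) = 0 := fun i => by
    rw [hherm, mem_orthogonalSubmodule.1 hw i, map_zero]
  simpa [hwv] using hy

end IsOrthonormal

theorem exists_mem_apply_self_ne_zero (hherm : ∀ x y, f y x = σ (f x y)) {z : F}
    (hz : z + σ z ≠ 0) {W : Submodule F V} {v w : V} (hv : v ∈ W) (hw : w ∈ W)
    (hvw : f v w ≠ 0) : ∃ x ∈ W, f x x ≠ 0 := by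
  by_contra! hiso
  set c := z * (f v w)⁻¹
  -- for isotropic `v`, `w` this says `c * f v w + σ (c * f v w) = 0`
  have h := hiso (v + c • w) (W.add_mem hv (W.smul_mem c hw))
  simp only [map_add, map_smulₛₗ, LinearMap.add_apply, LinearMap.smul_apply, smul_eq_mul,
    RingHom.id_apply, hiso v hv, hiso w hw, hherm v w] at h
  apply hz
  rw [← h, show z = c * f v w by simp [c, hvw], map_mul]
  ring

end HermitianForm

section MonomialMap

open scoped Matrix

variable {R M ι : Type*} [CommRing R] [AddCommGroup M] [Module R M]

namespace Module.Basis

noncomputable def monomialMap (b : Basis ι R M) (π : Equiv.Perm ι) (c : ι → R) : M →ₗ[R] M :=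
  b.constr R fun j => c j • b (π j)

variable (b : Basis ι R M) (π : Equiv.Perm ι) (c : ι → R)

@[simp]
theorem monomialMap_basis (j : ι) : b.monomialMap π c (b j) = c j • b (π j) :=
  b.constr_basis R _ j

variable [Fintype ι] [DecidableEq ι]

theorem toMatrix_monomialMap :
    LinearMap.toMatrix b b (b.monomialMap π c) = (π.permMatrix R)ᵀ * Matrix.diagonal c := by
  ext i j
  simp [LinearMap.toMatrix_apply, Finsupp.single_apply, Equiv.Perm.permMatrix,
    PEquiv.toMatrix_apply, Equiv.symm_apply_eq, eq_comm (a := i)]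

theorem det_monomialMap : LinearMap.det (b.monomialMap π c) = Equiv.Perm.sign π * ∏ i, c i := by
  rw [← LinearMap.det_toMatrix b, toMatrix_monomialMap, Matrix.det_mul, Matrix.det_transpose,
    Matrix.det_permutation, Matrix.det_diagonal]

theorem trace_monomialMap :
    LinearMap.trace R M (b.monomialMap π c) = ∑ i, if π i = i then c i else 0 := by
  rw [LinearMap.trace_eq_matrix_trace R b, toMatrix_monomialMap]
  simp [Matrix.trace, Equiv.Perm.permMatrix, PEquiv.toMatrix_apply, Equiv.symm_apply_eq,
    eq_comm (b := π _)]

end Module.Basis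

end MonomialMap

section Unitary

variable {F V : Type*} [Field F] [AddCommGroup V] [Module F V] {σ : F →+* F}
  {f : V →ₛₗ[σ] V →ₗ[F] F}

theorem IsOrthonormal.monomialMap_isometry {ι : Type*} {b : Module.Basis ι F V}
    (hb : IsOrthonormal f b) (π : Equiv.Perm ι) {c : ι → F} (hc : ∀ i, σ (c i) * c i = 1) (v w : V) :
    f (b.monomialMap π c v) (b.monomialMap π c w) = f v w := by
  classical
  suffices h : (f.comp (b.monomialMap π c)).compl₂ (b.monomialMap π c) = f from
    congr($h v w)
  refine LinearMap.ext_basis b b fun i j => ?_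
  simp only [LinearMap.compl₂_apply, LinearMap.comp_apply, Module.Basis.monomialMap_basis,
    map_smulₛₗ, LinearMap.smul_apply, smul_eq_mul, hb.apply_eq, π.injective.eq_iff]
  split_ifs with h
  · subst h
    simpa [mul_comm] using hc i
  · simp

theorem exists_det_eq_one_isometry_trace_eq_sub {m : ℕ} {b : Module.Basis (Fin 3 ⊕ Fin m) F V}
    (hb : IsOrthonormal f b) {α : F} (hα : σ α * α = 1) :
    ∃ g : V →ₗ[F] V, LinearMap.det g = 1 ∧ (∀ v w, f (g v) (g w) = f v w) ∧
      LinearMap.trace F V g = m - α := by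
  classical
  have hα0 : α ≠ 0 := by
    rintro rfl
    simp at hα
  refine ⟨b.monomialMap (Equiv.sumCongr (Equiv.swap 1 2) 1) (Sum.elim ![-α, α⁻¹, 1] 1), ?_,
    hb.monomialMap_isometry _ ?_, ?_⟩
  · rw [Module.Basis.det_monomialMap]
    simp [Fintype.prod_sum_type, Fin.prod_univ_three, hα0]
  · rintro (i | i)
    · fin_cases i <;> simp [hα, ← mul_inv]
    · simp
  · rw [Module.Basis.trace_monomialMap]
    simp [Fintype.sum_sum_type, Fin.sum_univ_three, Equiv.swap_apply_of_ne_of_ne]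
    ring

end Unitary

section OrthonormalBasis

variable {F V : Type*} [Field F] [Fintype F] [AddCommGroup V] [Module F V] {q₀ : ℕ}
  {σ : F →+* F} {f : V →ₛₗ[σ] V →ₗ[F] F}

theorem exists_smul_apply_self_eq_one (hq : Fintype.card F = q₀ ^ 2) (hσ : ∀ x, σ x = x ^ q₀)
    (hherm : ∀ x y, f y x = σ (f x y)) {x : V} (hx : f x x ≠ 0) :
    ∃ t : F, f (t • x) (t • x) = 1 := by
  obtain ⟨u, hu⟩ := FiniteField.exists_pow_add_one_eq hq hx (by rw [← hσ, ← hherm])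
  have hu0 : u ≠ 0 := by
    rintro rfl
    exact hx (by simp [← hu])
  refine ⟨u⁻¹, ?_⟩
  simp only [map_smulₛₗ, LinearMap.smul_apply, smul_eq_mul, RingHom.id_apply, hσ, ← hu]
  rw [inv_pow, pow_succ]
  field_simp

variable [FiniteDimensional F V]

theorem exists_mem_orthogonalSubmodule_apply_self_eq_one (hq : Fintype.card F = q₀ ^ 2)
    (hσ : ∀ x, σ x = x ^ q₀) (hherm : ∀ x y, f y x = σ (f x y))
    (hnd : ∀ v, (∀ w, f v w = 0) → v = 0) {ι : Type*} [Fintype ι] {v : ι → V}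
    (hv : IsOrthonormal f v) (hcard : Fintype.card ι < Module.finrank F V) :
    ∃ e ∈ orthogonalSubmodule f v, f e e = 1 := by
  obtain ⟨w, hw, hw0⟩ :=
    Submodule.exists_mem_ne_zero_of_ne_bot (orthogonalSubmodule_ne_bot v hcard)
  obtain ⟨y, hy, hwy⟩ := hv.exists_mem_orthogonalSubmodule_apply_ne_zero hherm hnd hw hw0
  obtain ⟨z, hz⟩ := FiniteField.exists_add_pow_ne_zero hq
  obtain ⟨x, hx, hxx⟩ := exists_mem_apply_self_ne_zero hherm (z := z) (by rwa [hσ]) hw hy hwy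
  obtain ⟨t, ht⟩ := exists_smul_apply_self_eq_one hq hσ hherm hxx
  exact ⟨t • x, Submodule.smul_mem _ t hx, ht⟩

theorem exists_isOrthonormal_fin (hq : Fintype.card F = q₀ ^ 2) (hσ : ∀ x, σ x = x ^ q₀)
    (hherm : ∀ x y, f y x = σ (f x y)) (hnd : ∀ v, (∀ w, f v w = 0) → v = 0) {k : ℕ}
    (hk : k ≤ Module.finrank F V) : ∃ v : Fin k → V, IsOrthonormal f v := by
  induction k with
  | zero => exact ⟨Fin.elim0, fun i => i.elim0, fun i => i.elim0⟩
  | succ k ih =>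
    obtain ⟨v, hv⟩ := ih (by omega)
    obtain ⟨e, he, hee⟩ :=
      exists_mem_orthogonalSubmodule_apply_self_eq_one hq hσ hherm hnd hv (by simpa using hk)
    exact ⟨_, hv.cons hherm hee (mem_orthogonalSubmodule.1 he)⟩

theorem exists_basis_isOrthonormal (hq : Fintype.card F = q₀ ^ 2) (hσ : ∀ x, σ x = x ^ q₀)
    (hherm : ∀ x y, f y x = σ (f x y)) (hnd : ∀ v, (∀ w, f v w = 0) → v = 0)
    {ι : Type*} [Fintype ι] (hcard : Fintype.card ι = Module.finrank F V) :
    ∃ b : Module.Basis ι F V, IsOrthonormal f b := by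
  obtain ⟨v, hv⟩ := exists_isOrthonormal_fin hq hσ hherm hnd hcard.le
  have hv' := hv.comp (Fintype.equivFin ι).injective
  exact ⟨basisOfLinearIndependentOfCardEqFinrank' _ hv'.linearIndependent hcard,
    by simpa using hv'⟩

end OrthonormalBasis

/-- For `n ≥ 3`, the subfield of `F_q` (`q = q₀²`) generated by the traces of all elements of
`SU(n, q₀)`, the determinant-one isometries of a non-degenerate hermitian form, is all of
`F_q`. -/
theorem unitary_traces_generate {F V : Type*} [Field F] [Fintype F] [AddCommGroup V] [Module F V]
    [FiniteDimensional F V]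
    (q₀ : ℕ) (hq : Fintype.card F = q₀ ^ 2)
    (σ : F →+* F) (hσ : ∀ x, σ x = x ^ q₀)
    (f : V →ₛₗ[σ] V →ₗ[F] F)
    (hherm : ∀ x y, f y x = σ (f x y))
    (hnd : ∀ v, (∀ w, f v w = 0) → v = 0)
    (hn : 3 ≤ Module.finrank F V) :
    Subfield.closure {x : F | ∃ g : V →ₗ[F] V, LinearMap.det g = 1 ∧
      (∀ v w, f (g v) (g w) = f v w) ∧ LinearMap.trace F V g = x} = ⊤ := by
  obtain ⟨α, hα⟩ := FiniteField.exists_orderOf_eq_add_one hq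
  have hαnorm : σ α * α = 1 := by rw [hσ, ← pow_succ, ← hα, pow_orderOf_eq_one]
  obtain ⟨b, hb⟩ := exists_basis_isOrthonormal (ι := Fin 3 ⊕ Fin (Module.finrank F V - 3))
    hq hσ hherm hnd (by simp; omega)
  obtain ⟨g, hdet, hiso, htr⟩ := exists_det_eq_one_isometry_trace_eq_sub hb hαnorm
  refine Subfield.eq_top_of_orderOf_eq_add_one hq ?_ hα
  rw [show α = (Module.finrank F V - 3 : ℕ) - (↑(Module.finrank F V - 3) - α) by ring]
  exact sub_mem (natCast_mem _ _) (Subfield.subset_closure ⟨g, hdet, hiso, htr⟩)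
end

section
/- Let q = q_0² be a square prime power and V an F_q-vector space with non-degenerate hermitian form f (with respect to x ↦ x^{q_0}, so x ↦ x + x^{q_0} is the trace map Tr to F_{q_0}). Suppose v = v_1 + ⋯ + v_s with each v_i singular (f(v_i,v_i) = 0). Then there exist an index i and λ ∈ F_{q_0} such that v − λ v_i is singular. -/
/-- If `v = v_1 + ⋯ + v_s` with each `v_i` singular for a non-degenerate hermitian form `f`
over `F_q` (`q = q₀²`, odd characteristic), then there exist an index `i` and `λ ∈ F_{q₀}`
(i.e. `λ^{q₀} = λ`) such that `v − λ v_i` is singular. -/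
theorem sum_singular_subtract_singular {F V : Type*} [Field F] [Fintype F]
    [AddCommGroup V] [Module F V] [FiniteDimensional F V]
    (q₀ : ℕ) (hq : Fintype.card F = q₀ ^ 2)
    (σ : F →+* F) (hσ : ∀ x, σ x = x ^ q₀)
    (f : V →ₛₗ[σ] V →ₗ[F] F)
    (hherm : ∀ x y, f y x = σ (f x y))
    (hnd : ∀ v, (∀ w, f v w = 0) → v = 0)
    (hodd : ringChar F ≠ 2)
    (s : ℕ) (hs : 0 < s) (v : Fin s → V)
    (hsing : ∀ i, f (v i) (v i) = 0) :
    ∃ (i : Fin s) (lam : F), lam ^ q₀ = lam ∧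
      f ((∑ j, v j) - lam • v i) ((∑ j, v j) - lam • v i) = 0 := by
  have hq0 : q₀ ≠ 0 := by
    rintro rfl
    simp at hq
  set w : V := ∑ j, v j with hw
  by_cases hc : f w w = 0
  · refine ⟨⟨0, hs⟩, 0, by simp [zero_pow hq0], by simpa using hc⟩
  · -- find i with trace of f w (v i) nonzero
    have hsum : ∑ i, (f w (v i) + f (v i) w) = 2 * f w w := by
      rw [Finset.sum_add_distrib]
      have h1 : ∑ i, f w (v i) = f w w := by
        simp only [hw, map_sum, LinearMap.sum_apply]
      have h2 : ∑ i, f (v i) w = f w w := by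
        simp only [hw, map_sum, LinearMap.sum_apply]
        rw [Finset.sum_comm]
      rw [h1, h2]; ring
    have h2ne : (2 : F) ≠ 0 := Ring.two_ne_zero hodd
    have : ∃ i, f w (v i) + f (v i) w ≠ 0 := by
      by_contra h
      push_neg at h
      rw [Finset.sum_congr rfl (fun i _ => h i)] at hsum
      simp at hsum
      rcases hsum with h' | h'
      · exact h2ne h'
      · exact hc h'
    obtain ⟨i, hi⟩ := this
    set t : F := f w (v i) + f (v i) w with ht
    have hσt : σ t = t := by
      rw [ht, map_add, ← hherm w (v i), ← hherm (v i) w, add_comm]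
    have hσw : σ (f w w) = f w w := (hherm w w).symm
    set lam : F := f w w / t with hlam
    have hσlam : σ lam = lam := by
      rw [hlam, map_div₀, hσt, hσw]
    refine ⟨i, lam, ?_, ?_⟩
    · rw [← hσ]; exact hσlam
    · have expand : f (w - lam • v i) (w - lam • v i)
          = f w w - lam * f (v i) w - (lam * f w (v i) - lam * lam * f (v i) (v i)) := by
        simp only [map_sub, LinearMap.sub_apply, map_smulₛₗ, map_smul,
          LinearMap.smul_apply, smul_eq_mul, hσlam, RingHom.id_apply]
        ring
      rw [expand, hsing i]
      have : lam * t = f w w := div_mul_cancel₀ _ hi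
      rw [ht] at this
      ring_nf
      ring_nf at this
      linear_combination -this
end

section
/- Let G be a finite group, X a generating set, and suppose there exists ε > 0 such that for every generating set S of G, either |S³| > |S|^{1+ε} or S³ = G. Then diam(Cay(G, X)) ≤ 3·(log|G| / log|X|)^{c} where c = log 3 / log(1+ε). -/
open scoped Pointwise

private lemma filter_ne_one_prod {G : Type*} [Group G] [DecidableEq G] (l : List G) :
    (l.filter (fun x => !decide (x = 1))).prod = l.prod := by
  induction l with
  | nil => rfl
  | cons a l ih =>
    rw [List.filter_cons]
    by_cases h : a = 1
    · simp [h, ih]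
    · simp [h, ih]

/-- The product theorem implies a polylogarithmic diameter bound: if for some `ε > 0` every
generating set `S` of the finite group `G` satisfies `|S³| > |S|^{1+ε}` or `S³ = G`, then for
any generating set `X`, every element of `G` is a product of at most
`3·(log|G|/log|X|)^{log 3 / log(1+ε)}` elements of `X ∪ X⁻¹`. -/
theorem product_theorem_diameter_bound {G : Type*} [Group G] [Fintype G]
    (X : Set G) (hX : Subgroup.closure X = ⊤)
    (ε : ℝ) (hε : 0 < ε)
    (hprod : ∀ S : Set G, Subgroup.closure S = ⊤ →
      (Nat.card ↥(S * S * S) : ℝ) > (Nat.card ↥S : ℝ) ^ (1 + ε) ∨ S * S * S = Set.univ) :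
    ∀ g : G, ∃ l : List G, (∀ x ∈ l, x ∈ X ∨ x⁻¹ ∈ X) ∧ l.prod = g ∧
      (l.length : ℝ) ≤ 3 * (Real.log (Nat.card G) / Real.log (Nat.card ↥X)) ^
        (Real.log 3 / Real.log (1 + ε)) := by
  classical
  intro g
  set c : ℝ := Real.log 3 / Real.log (1 + ε) with hc
  have hlog1ε : 0 < Real.log (1 + ε) := Real.log_pos (by linarith)
  have hcpos : 0 < c := div_pos (Real.log_pos (by norm_num)) hlog1ε
  by_cases hG1 : Nat.card G = 1
  · -- trivial group
    have hsub : Subsingleton G := (Nat.card_eq_one_iff_unique.mp hG1).1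
    refine ⟨[], by simp, ?_, ?_⟩
    · simpa using (Subsingleton.elim (1 : G) g)
    · rw [hG1]
      simp [Real.zero_rpow hcpos.ne']
  have hGpos : 0 < Nat.card G := Nat.card_pos
  have hG2 : 2 ≤ Nat.card G := by omega
  -- `X` has at least two elements
  have hXne : X.Nonempty := by
    by_contra h
    rw [Set.not_nonempty_iff_eq_empty] at h
    rw [h, Subgroup.closure_empty] at hX
    have : ∀ a : G, a = 1 := fun a => by
      have : a ∈ (⊥ : Subgroup G) := hX ▸ Subgroup.mem_top a
      simpa [Subgroup.mem_bot] using this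
    have : Nat.card G = 1 := Nat.card_eq_one_iff_unique.mpr
      ⟨⟨fun a b => by rw [this a, this b]⟩, ⟨1⟩⟩
    omega
  have hcardX : Nat.card ↥X = X.ncard := Nat.card_coe_set_eq X
  have hX2 : 2 ≤ Nat.card ↥X := by
    rw [hcardX]
    by_contra hcon
    push_neg at hcon
    have h01 : X.ncard = 0 ∨ X.ncard = 1 := by omega
    rcases h01 with hh | hh
    · rw [Set.ncard_eq_zero X.toFinite] at hh
      exact hXne.ne_empty hh
    · rw [Set.ncard_eq_one] at hh
      obtain ⟨x, rfl⟩ := hh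
      have hgen : Subgroup.closure ({x} : Set G) = ⊤ := hX
      rcases hprod {x} hgen with hbig | huniv
      · rw [Set.singleton_mul_singleton, Set.singleton_mul_singleton] at hbig
        simp [Real.one_rpow] at hbig
      · rw [Set.singleton_mul_singleton, Set.singleton_mul_singleton] at huniv
        have h1 : ({x * x * x} : Set G).ncard = 1 := Set.ncard_singleton _
        rw [huniv, Set.ncard_univ] at h1
        omega
  have hX1R : (1 : ℝ) < (Nat.card ↥X : ℝ) := by exact_mod_cast hX2
  have hlogX : 0 < Real.log (Nat.card ↥X) := Real.log_pos hX1R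
  set L : ℝ := Real.log (Nat.card G) / Real.log (Nat.card ↥X) with hLdef
  have hXleG : Nat.card ↥X ≤ Nat.card G :=
    Nat.card_le_card_of_injective (Subtype.val : X → G) Subtype.val_injective
  have hL1 : 1 ≤ L := by
    rw [hLdef, le_div_iff₀ hlogX, one_mul]
    exact Real.log_le_log (by exact_mod_cast (by omega : 0 < Nat.card ↥X))
      (by exact_mod_cast hXleG)
  -- the symmetrized generating set with identity
  set T : Set G := X ∪ X⁻¹ ∪ {1} with hT
  have h1T : (1 : G) ∈ T := by simp [hT]
  have hXT : X ⊆ T := fun x hx => Or.inl (Or.inl hx)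
  have hTsub : ∀ x ∈ T, x = 1 ∨ x ∈ X ∨ x⁻¹ ∈ X := by
    intro x hx
    rcases hx with (hx | hx) | hx
    · exact Or.inr (Or.inl hx)
    · exact Or.inr (Or.inr (Set.mem_inv.mp hx))
    · exact Or.inl hx
  have hTgen : ∀ n : ℕ, n ≠ 0 → Subgroup.closure (T ^ n) = ⊤ := by
    intro n hn
    rw [eq_top_iff, ← hX]
    exact Subgroup.closure_mono ((hXT.trans (Set.subset_pow h1T hn)))
  have hcard_le : ∀ S : Set G, (Nat.card ↥S : ℝ) ≤ (Nat.card G : ℝ) := by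
    intro S
    exact_mod_cast Nat.card_le_card_of_injective (Subtype.val : S → G) Subtype.val_injective
  have hcube : ∀ k : ℕ, T ^ 3 ^ k * T ^ 3 ^ k * T ^ 3 ^ k = T ^ 3 ^ (k + 1) := by
    intro k
    rw [pow_succ, pow_mul, pow_three]
    exact mul_assoc _ _ _
  -- main growth claim
  have claim : ∀ k : ℕ, T ^ 3 ^ k = Set.univ ∨
      (Nat.card ↥X : ℝ) ^ ((1 + ε) ^ k) ≤ (Nat.card ↥(T ^ 3 ^ k) : ℝ) := by
    intro k
    induction k with
    | zero =>
      right
      have hT1 : T ^ (3:ℕ) ^ 0 = T := by norm_num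
      rw [hT1, pow_zero, Real.rpow_one]
      have : Nat.card ↥X ≤ Nat.card ↥T := by
        rw [hcardX, Nat.card_coe_set_eq]
        exact Set.ncard_le_ncard hXT T.toFinite
      exact_mod_cast this
    | succ k ih =>
      rcases ih with huniv | hle
      · left
        apply Set.eq_univ_of_univ_subset
        rw [← huniv]
        exact Set.pow_subset_pow_right h1T (Nat.pow_le_pow_right (by norm_num) (by omega))
      · rcases hprod (T ^ 3 ^ k) (hTgen _ (by positivity)) with hbig | huniv
        · right
          rw [hcube k] at hbig
          calc (Nat.card ↥X : ℝ) ^ ((1 + ε) ^ (k + 1))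
              = ((Nat.card ↥X : ℝ) ^ ((1 + ε) ^ k)) ^ (1 + ε) := by
                rw [← Real.rpow_mul (by positivity), ← pow_succ]
            _ ≤ ((Nat.card ↥(T ^ 3 ^ k) : ℝ)) ^ (1 + ε) :=
                Real.rpow_le_rpow (by positivity) hle (by linarith)
            _ ≤ (Nat.card ↥(T ^ 3 ^ (k + 1)) : ℝ) := le_of_lt hbig
        · left
          rw [hcube k] at huniv
          exact huniv
  -- choose the number of steps
  obtain ⟨N, hN⟩ := pow_unbounded_of_one_lt L (by linarith : (1:ℝ) < 1 + ε)
  have hex : ∃ k : ℕ, L ≤ (1 + ε) ^ k := ⟨N, hN.le⟩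
  set K := Nat.find hex with hK
  have hKspec : L ≤ (1 + ε) ^ K := Nat.find_spec hex
  -- `|X|^L = |G|`
  have hXL : (Nat.card ↥X : ℝ) ^ L = (Nat.card G : ℝ) := by
    rw [Real.rpow_def_of_pos (by exact_mod_cast (by omega : 0 < Nat.card ↥X)), hLdef, mul_comm,
      div_mul_cancel₀ _ hlogX.ne', Real.exp_log (by exact_mod_cast hGpos)]
  -- the ball of radius 3^K is everything
  have huniv : T ^ 3 ^ K = Set.univ := by
    rcases Nat.eq_zero_or_pos K with hK0 | hKpos
    · -- K = 0 : then |G| ≤ |X| so X = univ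
      have hLle : L ≤ 1 := by rw [hK0] at hKspec; simpa using hKspec
      have : Real.log (Nat.card G) ≤ Real.log (Nat.card ↥X) := by
        rw [hLdef, div_le_one hlogX] at hLle
        exact hLle
      have hGleX : Nat.card G ≤ Nat.card ↥X := by
        have := Real.exp_le_exp.mpr this
        rw [Real.exp_log (by exact_mod_cast hGpos),
          Real.exp_log (by linarith : (0:ℝ) < (Nat.card ↥X : ℝ))] at this
        exact_mod_cast this
      have hXuniv : X = Set.univ := by
        apply Set.eq_of_subset_of_ncard_le (Set.subset_univ X)
        rw [Set.ncard_univ, ← hcardX]; exact hGleX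
      rw [hK0]
      apply Set.eq_univ_of_univ_subset
      calc Set.univ = X := hXuniv.symm
        _ ⊆ T := hXT
        _ = T ^ 3 ^ 0 := by rw [pow_zero, pow_one]
    · -- K ≥ 1
      obtain ⟨M, hM⟩ : ∃ M, K = M + 1 := ⟨K - 1, by omega⟩
      rw [hM]
      rw [hM] at hKspec
      have hMlt : (1 + ε) ^ M < L := by
        have := Nat.find_min hex (m := M) (by omega)
        linarith [not_le.mp this]
      rcases claim M with hMuniv | hMle
      · apply Set.eq_univ_of_univ_subset
        rw [← hMuniv]
        exact Set.pow_subset_pow_right h1T (Nat.pow_le_pow_right (by norm_num) (by omega))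
      · rcases hprod (T ^ 3 ^ M) (hTgen _ (by positivity)) with hbig | huniv'
        · exfalso
          rw [hcube M] at hbig
          have h1 : (Nat.card G : ℝ) < (Nat.card ↥(T ^ 3 ^ (M + 1)) : ℝ) := by
            calc (Nat.card G : ℝ) = (Nat.card ↥X : ℝ) ^ L := hXL.symm
              _ ≤ (Nat.card ↥X : ℝ) ^ ((1 + ε) ^ (M + 1)) :=
                  Real.rpow_le_rpow_of_exponent_le (le_of_lt hX1R) hKspec
              _ = ((Nat.card ↥X : ℝ) ^ ((1 + ε) ^ M)) ^ (1 + ε) := by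
                  rw [← Real.rpow_mul (by positivity), ← pow_succ]
              _ ≤ ((Nat.card ↥(T ^ 3 ^ M) : ℝ)) ^ (1 + ε) :=
                  Real.rpow_le_rpow (by positivity) hMle (by linarith)
              _ < _ := hbig
          exact absurd (hcard_le (T ^ 3 ^ (M + 1))) (not_le.mpr h1)
        · rw [hcube M] at huniv'
          exact huniv'
  -- the numeric bound 3^K ≤ 3 * L^c
  have h1εc : (1 + ε : ℝ) ^ c = 3 := by
    rw [Real.rpow_def_of_pos (by linarith), hc, mul_comm,
      div_mul_cancel₀ _ hlog1ε.ne', Real.exp_log (by norm_num)]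
  have hLc1 : (1 : ℝ) ≤ L ^ c := by
    calc (1:ℝ) = 1 ^ c := (Real.one_rpow c).symm
      _ ≤ L ^ c := Real.rpow_le_rpow (by norm_num) hL1 hcpos.le
  have hbound : ((3 ^ K : ℕ) : ℝ) ≤ 3 * L ^ c := by
    rcases Nat.eq_zero_or_pos K with hK0 | hKpos
    · rw [hK0]; push_cast; linarith
    · obtain ⟨M, hM⟩ : ∃ M, K = M + 1 := ⟨K - 1, by omega⟩
      have hMlt : (1 + ε) ^ M < L := by
        have := Nat.find_min hex (m := M) (by omega)
        linarith [not_le.mp this]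
      have h3M : ((3:ℝ)) ^ M ≤ L ^ c := by
        calc ((3:ℝ)) ^ M = ((1 + ε : ℝ) ^ c) ^ M := by rw [h1εc]
          _ = ((1 + ε : ℝ) ^ M) ^ c := by
              rw [← Real.rpow_natCast ((1 + ε : ℝ) ^ c) M, ← Real.rpow_mul (by linarith),
                mul_comm, Real.rpow_mul (by linarith), Real.rpow_natCast]
          _ ≤ L ^ c := Real.rpow_le_rpow (by positivity) hMlt.le hcpos.le
      rw [hM]
      push_cast
      rw [pow_succ, mul_comm]
      exact mul_le_mul_of_nonneg_left h3M (by norm_num)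
  -- extract the word
  have hg : g ∈ T ^ 3 ^ K := by rw [huniv]; trivial
  rw [Set.mem_pow] at hg
  obtain ⟨f, hf⟩ := hg
  set l0 : List G := List.ofFn (fun i => (f i : G)) with hl0
  refine ⟨l0.filter (fun x => !decide (x = 1)), ?_, ?_, ?_⟩
  · intro x hx
    rw [List.mem_filter] at hx
    obtain ⟨hx1, hx2⟩ := hx
    have hxne : x ≠ 1 := by simpa using hx2
    rw [hl0, List.mem_ofFn] at hx1
    obtain ⟨i, hi⟩ := hx1
    have hxT : x ∈ T := hi ▸ (f i).2
    rcases hTsub x hxT with h | h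
    · exact absurd h hxne
    · exact h
  · rw [filter_ne_one_prod, hl0, hf]
  · calc ((l0.filter (fun x => !decide (x = 1))).length : ℝ)
        ≤ (l0.length : ℝ) := by exact_mod_cast List.length_filter_le _ _
      _ = ((3 ^ K : ℕ) : ℝ) := by rw [hl0, List.length_ofFn]
      _ ≤ 3 * L ^ c := hbound
end

section
/- Let G be a finite quasisimple group with generating set X containing a non-central element t. Define Y_m := {x_m⋯x_1 t x_1^{-1}⋯x_m^{-1} : x_i ∈ X ∪ {1}}. Then for any m ≥ log₂|G|, the set Y_m generates G, and every element of Y_m is a product of at most 2m+1 elements of X ∪ X^{-1}; consequently diam(Cay(G,X)) ≤ (2 log₂|G| + 1)·diam(Cay(G, Y_m)). -/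
/-- `g` is a product of at most `d` elements of `X ∪ X⁻¹`. -/
def WordLenLe {G : Type*} [Group G] (X : Set G) (d : ℕ) (g : G) : Prop :=
  ∃ l : List G, (∀ x ∈ l, x ∈ X ∨ x⁻¹ ∈ X) ∧ l.length ≤ d ∧ l.prod = g

/-- The set `Y_m` of conjugates of `t` by products of at most `m` elements of `X ∪ {1}`. -/
def ConjSet {G : Type*} [Group G] (X : Set G) (t : G) (m : ℕ) : Set G :=
  {g : G | ∃ l : List G, l.length ≤ m ∧ (∀ x ∈ l, x ∈ X) ∧ g = l.prod * t * l.prod⁻¹}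

/-!
Put `H_k = ⟨Y_k⟩`. Since `x Y_k x⁻¹ ⊆ Y_{k+1}` for `x ∈ X`, a step with `H_{k+1} = H_k` makes
`H_k` stable under conjugation by the generators, hence normal in the finite group `G`; it
contains the non-central `t`, so in a quasisimple group it is all of `G`. Before that happens
the chain grows strictly, so `|H_k|` at least doubles each step, and `|H_k| ≥ 2^(k+1)` forces
stabilization by step `log₂|G|`. Conjugating `t` by a word of length `≤ m` costs `≤ 2m+1`
letters, which gives the length bounds.
-/

namespace WordLenLe

variable {G : Type*} [Group G] {X : Set G}

theorem mono {d d' : ℕ} {g : G} (h : WordLenLe X d g) (hd : d ≤ d') : WordLenLe X d' g :=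
  let ⟨l, hl, hlen, hprod⟩ := h
  ⟨l, hl, hlen.trans hd, hprod⟩

theorem one : WordLenLe X 0 (1 : G) :=
  ⟨[], by simp, le_rfl, rfl⟩

theorem of_mem {x : G} (hx : x ∈ X) : WordLenLe X 1 x :=
  ⟨[x], by simp [hx], le_rfl, by simp⟩

theorem mul {a b : ℕ} {g h : G} (hg : WordLenLe X a g) (hh : WordLenLe X b h) :
    WordLenLe X (a + b) (g * h) := by
  obtain ⟨l₁, hl₁, hlen₁, rfl⟩ := hg
  obtain ⟨l₂, hl₂, hlen₂, rfl⟩ := hh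
  refine ⟨l₁ ++ l₂, ?_, ?_, List.prod_append⟩
  · simpa only [List.mem_append, or_imp, forall_and] using ⟨hl₁, hl₂⟩
  · rw [List.length_append]
    omega

theorem inv {d : ℕ} {g : G} (h : WordLenLe X d g) : WordLenLe X d g⁻¹ := by
  obtain ⟨l, hl, hlen, rfl⟩ := h
  refine ⟨(l.map (·⁻¹)).reverse, fun x hx => ?_, by simpa using hlen,
    (List.prod_inv_reverse l).symm⟩
  simp only [List.mem_reverse, List.mem_map] at hx
  obtain ⟨y, hy, rfl⟩ := hx
  simpa [or_comm] using hl y hy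

theorem list_prod {c : ℕ} {l : List G} (h : ∀ y ∈ l, WordLenLe X c y) :
    WordLenLe X (c * l.length) l.prod := by
  induction l with
  | nil => simpa using one
  | cons y l ih =>
    simp only [List.forall_mem_cons] at h
    simpa [Nat.mul_succ, add_comm] using h.1.mul (ih h.2)

theorem trans {Y : Set G} {c D : ℕ} {g : G} (hY : ∀ y ∈ Y, WordLenLe X c y)
    (hg : WordLenLe Y D g) : WordLenLe X (c * D) g := by
  obtain ⟨l, hl, hlen, rfl⟩ := hg
  have hl' : ∀ y ∈ l, WordLenLe X c y := fun y hy =>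
    (hl y hy).elim (hY y) fun h => inv_inv y ▸ (hY _ h).inv
  exact (list_prod hl').mono (Nat.mul_le_mul_left c hlen)

end WordLenLe

namespace Subgroup

variable {G : Type*} [Group G]

theorem normal_of_forall_conj_mem [Finite G] {X : Set G} (hX : closure X = ⊤) {H : Subgroup G}
    (hconj : ∀ x ∈ X, ∀ h ∈ H, x * h * x⁻¹ ∈ H) : H.Normal := by
  rw [← normalizer_eq_top_iff, eq_top_iff, ← hX, closure_le]
  exact fun x hx => mem_normalizer_fintype (hconj x hx)

theorem two_mul_card_le_card_of_lt [Finite G] {H K : Subgroup G} (h : H < K) :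
    2 * Nat.card H ≤ Nat.card K := by
  obtain ⟨j, hj⟩ := card_dvd_of_le h.le
  have hK : 0 < Nat.card K := Nat.card_pos
  have hj1 : j ≠ 1 := by
    rintro rfl
    exact h.ne (eq_of_le_of_card_ge h.le (by rw [hj, mul_one]))
  rw [hj] at hK ⊢
  have hj0 : j ≠ 0 := by rintro rfl; simp at hK
  rw [mul_comm]
  exact Nat.mul_le_mul_left _ (by omega)

theorem two_pow_le_card_of_ne_top [Finite G] {H : ℕ → Subgroup G} (hmono : Monotone H)
    (hstab : ∀ k, H (k + 1) ≤ H k → H k = ⊤) (h0 : H 0 ≠ ⊥) :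
    ∀ k, H k ≠ ⊤ → 2 ^ (k + 1) ≤ Nat.card (H k)
  | 0, _ => (one_lt_card_iff_ne_bot _).2 h0
  | k + 1, hk => by
    have hk' : H k ≠ ⊤ := fun h => hk (top_unique (h ▸ hmono k.le_succ))
    have hlt : H k < H (k + 1) := lt_of_le_not_ge (hmono k.le_succ) fun h => hk' (hstab k h)
    calc 2 ^ (k + 1 + 1) = 2 * 2 ^ (k + 1) := by ring
      _ ≤ 2 * Nat.card (H k) :=
        Nat.mul_le_mul_left 2 (two_pow_le_card_of_ne_top hmono hstab h0 k hk')
      _ ≤ Nat.card (H (k + 1)) := two_mul_card_le_card_of_lt hlt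

theorem eq_top_of_card_le_two_pow [Finite G] {H : ℕ → Subgroup G} (hmono : Monotone H)
    (hstab : ∀ k, H (k + 1) ≤ H k → H k = ⊤) (h0 : H 0 ≠ ⊥) {m : ℕ}
    (hm : Nat.card G ≤ 2 ^ m) : H m = ⊤ := by
  by_contra hne
  exact (Nat.pow_lt_pow_succ one_lt_two).not_ge
    ((two_pow_le_card_of_ne_top hmono hstab h0 m hne).trans ((card_le_card_group _).trans hm))

theorem eq_top_of_normal_of_not_le_center (hperf : _root_.commutator G = ⊤)
    (hsimple : IsSimpleGroup (G ⧸ center G)) (N : Subgroup G) [N.Normal]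
    (hN : ¬ N ≤ center G) : N = ⊤ := by
  let π := QuotientGroup.mk' (center G)
  have hmap : N.map π = ⊤ := by
    have hnormal : (N.map π).Normal := .map ‹_› π (QuotientGroup.mk'_surjective _)
    refine (hsimple.eq_bot_or_eq_top_of_normal _ hnormal).resolve_left ?_
    rwa [map_eq_bot_iff, QuotientGroup.ker_mk']
  have hsup : N ⊔ center G = ⊤ := by
    rw [← QuotientGroup.ker_mk' (center G), ← comap_map_eq, hmap, comap_top]
  rw [eq_top_iff, ← hperf]
  exact Normal.commutator_le_of_self_sup_commutative_eq_top hsup inferInstance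

end Subgroup

section ConjSet

variable {G : Type*} [Group G] {X : Set G} {t : G}

theorem mem_conjSet_self (k : ℕ) : t ∈ ConjSet X t k :=
  ⟨[], by simp, by simp, by simp⟩

theorem conjSet_mono : Monotone (ConjSet X t) :=
  fun _ _ hkk' _ ⟨l, hlen, hl, hg⟩ => ⟨l, hlen.trans hkk', hl, hg⟩

theorem conj_mem_conjSet_succ {x g : G} {k : ℕ} (hx : x ∈ X) (hg : g ∈ ConjSet X t k) :
    x * g * x⁻¹ ∈ ConjSet X t (k + 1) := by
  obtain ⟨l, hlen, hl, rfl⟩ := hg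
  refine ⟨x :: l, by simpa using hlen, List.forall_mem_cons.2 ⟨hx, hl⟩, ?_⟩
  simp only [List.prod_cons, mul_inv_rev]
  group

theorem wordLenLe_of_mem_conjSet (ht : t ∈ X) {m : ℕ} {g : G} (hg : g ∈ ConjSet X t m) :
    WordLenLe X (2 * m + 1) g := by
  obtain ⟨l, hlen, hl, rfl⟩ := hg
  have hw : WordLenLe X m l.prod := ⟨l, fun x hx => Or.inl (hl x hx), hlen, rfl⟩
  exact ((hw.mul (.of_mem ht)).mul hw.inv).mono (by omega)

theorem closure_conjSet_mono : Monotone fun k => Subgroup.closure (ConjSet X t k) :=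
  fun _ _ hkk' => Subgroup.closure_mono (conjSet_mono hkk')

theorem normal_closure_conjSet_of_succ_le [Finite G] (hX : Subgroup.closure X = ⊤) {k : ℕ}
    (hk : Subgroup.closure (ConjSet X t (k + 1)) ≤ Subgroup.closure (ConjSet X t k)) :
    (Subgroup.closure (ConjSet X t k)).Normal := by
  refine Subgroup.normal_of_forall_conj_mem hX fun x hx h hh => hk ?_
  have hconj : x * h * x⁻¹ ∈
      (Subgroup.closure (ConjSet X t k)).map (MulAut.conj x).toMonoidHom := ⟨h, hh, rfl⟩
  rw [MonoidHom.map_closure] at hconj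
  refine Subgroup.closure_mono ?_ hconj
  rintro _ ⟨g, hg, rfl⟩
  exact conj_mem_conjSet_succ hx hg

end ConjSet

/-- Let `G` be a finite quasisimple group, `X` a generating set, `t ∈ X` non-central, and
`m ≥ log₂|G|`.  Then `Y_m = ConjSet X t m` generates `G`, every element of `Y_m` is a product
of at most `2m+1` elements of `X ∪ X⁻¹`, and consequently
`diam(Cay(G,X)) ≤ (2m+1)·diam(Cay(G,Y_m))`. -/
theorem quasisimple_conjugates_generate {G : Type*} [Group G] [Fintype G]
    (hperf : commutator G = ⊤)
    (hsimple : IsSimpleGroup (G ⧸ Subgroup.center G))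
    (X : Set G) (hX : Subgroup.closure X = ⊤)
    (t : G) (ht : t ∈ X) (htnc : t ∉ Subgroup.center G)
    (m : ℕ) (hm : Real.logb 2 (Nat.card G) ≤ m) :
    Subgroup.closure (ConjSet X t m) = ⊤ ∧
    (∀ g ∈ ConjSet X t m, WordLenLe X (2 * m + 1) g) ∧
    (∀ D : ℕ, (∀ g : G, WordLenLe (ConjSet X t m) D g) →
      ∀ g : G, WordLenLe X ((2 * m + 1) * D) g) := by
  set H : ℕ → Subgroup G := fun k => Subgroup.closure (ConjSet X t k)
  have ht_mem (k : ℕ) : t ∈ H k := Subgroup.subset_closure (mem_conjSet_self k)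
  have hstab (k : ℕ) (hk : H (k + 1) ≤ H k) : H k = ⊤ :=
    have := normal_closure_conjSet_of_succ_le hX hk
    Subgroup.eq_top_of_normal_of_not_le_center hperf hsimple _ fun hle => htnc (hle (ht_mem k))
  have h0 : H 0 ≠ ⊥ := fun h =>
    htnc (Subgroup.mem_bot.1 (h ▸ ht_mem 0) ▸ Subgroup.one_mem _)
  have hcard : Nat.card G ≤ 2 ^ m := by
    have := (Real.logb_le_iff_le_rpow one_lt_two (by exact_mod_cast Nat.card_pos)).1 hm
    exact_mod_cast this.trans_eq (Real.rpow_natCast 2 m)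
  have hword (g : G) (hg : g ∈ ConjSet X t m) := wordLenLe_of_mem_conjSet ht hg
  exact ⟨Subgroup.eq_top_of_card_le_two_pow closure_conjSet_mono hstab h0 hcard, hword,
    fun D hD g => (hD g).trans hword⟩
end

section
/- Let V be a finite-dimensional vector space over a field F and let s_1 = 1 + u_1 ⊗ φ_1, s_2 = 1 + u_2 ⊗ φ_2, s_3 = 1 + u_3 ⊗ φ_3 be transvections with w(s_1,s_2,s_3) + w(s_1,s_3,s_2) ≠ 0, where w(s_i,s_j,s_k) = φ_j(u_i)φ_k(u_j)φ_i(u_k). Then u_1, u_2, u_3 are linearly independent, φ_1, φ_2, φ_3 are linearly independent, and V = span{u_1,u_2,u_3} ⊕ (ker φ_1 ∩ ker φ_2 ∩ ker φ_3). -/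
lemma aux_solve {F : Type*} [Field F] (a b c d e f c₁ c₂ c₃ : F)
    (hk : a*d*e + b*f*c ≠ 0)
    (e1 : c*c₂ + e*c₃ = 0) (e2 : a*c₁ + f*c₃ = 0) (e3 : b*c₁ + d*c₂ = 0) :
    c₁ = 0 ∧ c₂ = 0 ∧ c₃ = 0 := by
  have h1 : (a*d*e + b*f*c) * c₁ = 0 := by
    linear_combination (-(d*f))*e1 + d*e*e2 + f*c*e3
  have h2 : (a*d*e + b*f*c) * c₂ = 0 := by
    linear_combination b*f*e1 + (-(b*e))*e2 + a*e*e3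
  have h3 : (a*d*e + b*f*c) * c₃ = 0 := by
    linear_combination a*d*e1 + b*c*e2 + (-(a*c))*e3
  exact ⟨(mul_eq_zero.mp h1).resolve_left hk,
    (mul_eq_zero.mp h2).resolve_left hk, (mul_eq_zero.mp h3).resolve_left hk⟩

/-- If transvections `s_i = 1 + u_i ⊗ φ_i` satisfy `w(s₁,s₂,s₃) + w(s₁,s₃,s₂) ≠ 0`, then
`u₁, u₂, u₃` are linearly independent, `φ₁, φ₂, φ₃` are linearly independent, and
`V = span{u₁,u₂,u₃} ⊕ (ker φ₁ ∩ ker φ₂ ∩ ker φ₃)`. -/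
theorem nondeg_triangle_decomposition {F V : Type*} [Field F] [AddCommGroup V] [Module F V]
    [FiniteDimensional F V]
    (u₁ u₂ u₃ : V) (φ₁ φ₂ φ₃ : V →ₗ[F] F)
    (hu₁ : u₁ ≠ 0) (hu₂ : u₂ ≠ 0) (hu₃ : u₃ ≠ 0)
    (hφ₁ : φ₁ ≠ 0) (hφ₂ : φ₂ ≠ 0) (hφ₃ : φ₃ ≠ 0)
    (h₁ : φ₁ u₁ = 0) (h₂ : φ₂ u₂ = 0) (h₃ : φ₃ u₃ = 0)
    (hw : φ₂ u₁ * φ₃ u₂ * φ₁ u₃ + φ₃ u₁ * φ₂ u₃ * φ₁ u₂ ≠ 0) :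
    LinearIndependent F ![u₁, u₂, u₃] ∧ LinearIndependent F ![φ₁, φ₂, φ₃] ∧
      IsCompl (Submodule.span F {u₁, u₂, u₃})
        (LinearMap.ker φ₁ ⊓ LinearMap.ker φ₂ ⊓ LinearMap.ker φ₃) := by
  set a := φ₂ u₁ with ha
  set b := φ₃ u₁ with hb
  set c := φ₁ u₂ with hc
  set d := φ₃ u₂ with hd
  set e := φ₁ u₃ with he
  set f := φ₂ u₃ with hf
  have hw' : a*d*e + b*f*c ≠ 0 := hw
  have hw'' : c*f*b + e*d*a ≠ 0 := fun h => hw' (by linear_combination h)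
  refine ⟨?_, ?_, ?_⟩
  · apply Fintype.linearIndependent_iff.mpr
    intro g hg
    have hsum : g 0 • u₁ + g 1 • u₂ + g 2 • u₃ = 0 := by
      simpa [Fin.sum_univ_three] using hg
    have E1 : c * g 1 + e * g 2 = 0 := by
      have := congrArg φ₁ hsum
      simp [map_add, map_smul, h₁, smul_eq_mul, ← hc, ← he] at this
      linear_combination this
    have E2 : a * g 0 + f * g 2 = 0 := by
      have := congrArg φ₂ hsum
      simp [map_add, map_smul, h₂, smul_eq_mul, ← ha, ← hf] at this
      linear_combination this
    have E3 : b * g 0 + d * g 1 = 0 := by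
      have := congrArg φ₃ hsum
      simp [map_add, map_smul, h₃, smul_eq_mul, ← hb, ← hd] at this
      linear_combination this
    obtain ⟨z0, z1, z2⟩ := aux_solve a b c d e f (g 0) (g 1) (g 2) hw' E1 E2 E3
    intro i; fin_cases i <;> assumption
  · apply Fintype.linearIndependent_iff.mpr
    intro g hg
    have hsum : g 0 • φ₁ + g 1 • φ₂ + g 2 • φ₃ = 0 := by
      simpa [Fin.sum_univ_three] using hg
    have E1 : a * g 1 + b * g 2 = 0 := by
      have := congrArg (fun ψ : V →ₗ[F] F => ψ u₁) hsum
      simp [LinearMap.add_apply, LinearMap.smul_apply, h₁, smul_eq_mul, ← ha, ← hb] at this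
      linear_combination this
    have E2 : c * g 0 + d * g 2 = 0 := by
      have := congrArg (fun ψ : V →ₗ[F] F => ψ u₂) hsum
      simp [LinearMap.add_apply, LinearMap.smul_apply, h₂, smul_eq_mul, ← hc, ← hd] at this
      linear_combination this
    have E3 : e * g 0 + f * g 1 = 0 := by
      have := congrArg (fun ψ : V →ₗ[F] F => ψ u₃) hsum
      simp [LinearMap.add_apply, LinearMap.smul_apply, h₃, smul_eq_mul, ← he, ← hf] at this
      linear_combination this
    obtain ⟨z0, z1, z2⟩ := aux_solve c e a f b d (g 0) (g 1) (g 2) hw'' E1 E2 E3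
    intro i; fin_cases i <;> assumption
  · constructor
    · rw [Submodule.disjoint_def]
      intro x hx hxK
      rcases Submodule.mem_span_insert.mp hx with ⟨g0, z, hz, rfl⟩
      rcases Submodule.mem_span_pair.mp hz with ⟨g1, g2, rfl⟩
      obtain ⟨⟨k1, k2⟩, k3⟩ := hxK
      simp only [SetLike.mem_coe, LinearMap.mem_ker] at k1 k2 k3
      have E1 : c * g1 + e * g2 = 0 := by
        simp [map_add, map_smul, h₁, smul_eq_mul, ← hc, ← he] at k1
        linear_combination k1
      have E2 : a * g0 + f * g2 = 0 := by
        simp [map_add, map_smul, h₂, smul_eq_mul, ← ha, ← hf] at k2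
        linear_combination k2
      have E3 : b * g0 + d * g1 = 0 := by
        simp [map_add, map_smul, h₃, smul_eq_mul, ← hb, ← hd] at k3
        linear_combination k3
      obtain ⟨z0, z1, z2⟩ := aux_solve a b c d e f g0 g1 g2 hw' E1 E2 E3
      simp [z0, z1, z2]
    · rw [codisjoint_iff, eq_top_iff]
      intro v _
      set k := a*d*e + b*f*c with hk
      set p := φ₁ v with hp
      set q := φ₂ v with hq
      set r := φ₃ v with hr
      set c₁ : F := (-(p*f*d) + c*f*r + e*d*q)/k with hc₁
      set c₂ : F := (p*f*b + e*a*r - e*q*b)/k with hc₂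
      set c₃ : F := (-(c*a*r) + c*q*b + p*a*d)/k with hc₃
      set s := c₁ • u₁ + c₂ • u₂ + c₃ • u₃ with hs
      have hsmem : s ∈ Submodule.span F {u₁, u₂, u₃} := by
        apply Submodule.add_mem
        apply Submodule.add_mem
        · exact Submodule.smul_mem _ _ (Submodule.subset_span (by simp))
        · exact Submodule.smul_mem _ _ (Submodule.subset_span (by simp))
        · exact Submodule.smul_mem _ _ (Submodule.subset_span (by simp))
      have hK : v - s ∈ LinearMap.ker φ₁ ⊓ LinearMap.ker φ₂ ⊓ LinearMap.ker φ₃ := by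
        refine ⟨⟨?_, ?_⟩, ?_⟩ <;> simp only [SetLike.mem_coe, LinearMap.mem_ker]
        · have : φ₁ (v - s) = p - (c₁ * 0 + c₂ * c + c₃ * e) := by
            simp [hs, map_sub, map_add, map_smul, smul_eq_mul, h₁, ← hc, ← he, ← hp]
            try ring
          rw [this, hc₂, hc₃]; field_simp; ring
        · have : φ₂ (v - s) = q - (c₁ * a + c₂ * 0 + c₃ * f) := by
            simp [hs, map_sub, map_add, map_smul, smul_eq_mul, h₂, ← ha, ← hf, ← hq]
            try ring
          rw [this, hc₁, hc₃]; field_simp; ring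
        · have : φ₃ (v - s) = r - (c₁ * b + c₂ * d + c₃ * 0) := by
            simp [hs, map_sub, map_add, map_smul, smul_eq_mul, h₃, ← hb, ← hd, ← hr]
            try ring
          rw [this, hc₁, hc₂]; field_simp; ring
      exact Submodule.mem_sup.mpr ⟨s, hsmem, v - s, hK, by abel⟩
end
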